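/- Let W be an n-by-n complex matrix and m a positive integer. Suppose that for each positive integer k there exists a real number a_k with \|W^k\|_1 \le a_k. Let p be a positive integer with 1 \le p \le m+1, let p_0 be a multiple of p with m+1 \le p_0 \le m+1+p, and define \alpha_p = max{ a_k^{1/k} : k = p, m+1, m+2, \ldots, p_0 - 1, p_0 + 1, p_0 + 2, \ldots, m+1+p }. Assume \alpha_p > 0. Let \varepsilon > 0 and let s be a nonnegative integer such that \alpha_p/2^s \le \varepsilon^{1/(m+1)} and \varepsilon^{1/(m+1)} < m+2. Then the Taylor remainder of the scaled matrix satisfies \|R_m(W/2^s)\|_1 \le \varepsilon \cdot 1/(1 - \varepsilon^{1/(m+1)}/(m+2)), where R_m(A) = e^A - \sum_{k=0}^{m} A^k/k!. -/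

import Mathlib

/-!
A bound `‖x ^ k‖ ≤ b ^ k` survives adding exponents, so bounds on `x ^ p` and on the powers in the
window `m + 1, …, m + p` that are not multiples of `p` give it for every `k ≥ m + 1`: the one
multiple of `p` in the window is a power of `x ^ p`, and every larger exponent is a window exponent
plus multiples of `p`. With `b = α / 2 ^ s`, the tail of the exponential series is then dominated by
`b ^ (m + 1) ∑ (b / (m + 2)) ^ i`, because `(m + 2) ^ i ≤ (m + 1 + i)!`. The matrix 1-norm is the
`L∞` operator norm of the transpose, hence a submultiplicative algebra norm.
-/

open NormedSpace Finset Nat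

/-- The matrix 1-norm of a complex square matrix: the operator norm induced by the vector
1-norm, i.e. the maximum absolute column sum `max_j ∑_i ‖A i j‖`. -/
noncomputable def matrixOneNorm {n : ℕ} (A : Matrix (Fin n) (Fin n) ℂ) : ℝ :=
  ⨆ j, ∑ i, ‖A i j‖

section PowerBounds

variable {R : Type*} [SeminormedRing R] {x : R} {b : ℝ}

theorem norm_pow_add_le_of_le {k l : ℕ} (hk : ‖x ^ k‖ ≤ b ^ k) (hl : ‖x ^ l‖ ≤ b ^ l) :
    ‖x ^ (k + l)‖ ≤ b ^ (k + l) := by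
  rw [pow_add, pow_add]
  exact (norm_mul_le _ _).trans (mul_le_mul hk hl (norm_nonneg _) ((norm_nonneg _).trans hk))

theorem norm_pow_mul_le_of_le {p : ℕ} (hp : ‖x ^ p‖ ≤ b ^ p) {q : ℕ} (hq : 0 < q) :
    ‖x ^ (p * q)‖ ≤ b ^ (p * q) := by
  induction q, hq using Nat.le_induction with
  | base => simpa using hp
  | succ q _ ih => rw [mul_add_one]; exact norm_pow_add_le_of_le ih hp

theorem norm_pow_le_of_le_on_Ico {p m : ℕ} (hp0 : 0 < p) (hp : ‖x ^ p‖ ≤ b ^ p)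
    (hwin : ∀ r ∈ Ico (m + 1) (m + 1 + p), ‖x ^ r‖ ≤ b ^ r) {k : ℕ} (hk : m + 1 ≤ k) :
    ‖x ^ k‖ ≤ b ^ k := by
  induction k using Nat.strong_induction_on with
  | _ k ih =>
    by_cases hkp : k < m + 1 + p
    · exact hwin k (mem_Ico.2 ⟨hk, hkp⟩)
    · obtain ⟨j, rfl⟩ : ∃ j, k = j + p := ⟨k - p, by omega⟩
      exact norm_pow_add_le_of_le (ih j (by omega) (by omega)) hp

theorem norm_pow_le_of_le_on_Ico_of_not_dvd {p m : ℕ} (hp0 : 0 < p) (hp : ‖x ^ p‖ ≤ b ^ p)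
    (hwin : ∀ r ∈ Ico (m + 1) (m + 1 + p), ¬p ∣ r → ‖x ^ r‖ ≤ b ^ r) {k : ℕ} (hk : m + 1 ≤ k) :
    ‖x ^ k‖ ≤ b ^ k := by
  refine norm_pow_le_of_le_on_Ico hp0 hp (fun r hr => ?_) hk
  by_cases hpr : p ∣ r
  · obtain ⟨q, rfl⟩ := hpr
    refine norm_pow_mul_le_of_le hp (Nat.pos_of_ne_zero ?_)
    rintro rfl
    simp at hr
  · exact hwin r hr hpr

end PowerBounds

theorem pow_le_factorial_add (m i : ℕ) : (m + 2) ^ i ≤ (m + 1 + i)! :=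
  (Nat.le_mul_of_pos_left _ (factorial_pos _)).trans factorial_mul_pow_le_factorial

theorem norm_exp_sub_sum_range_le {𝕂 𝔸 : Type*} [RCLike 𝕂] [NormedRing 𝔸] [NormedAlgebra 𝕂 𝔸]
    [CompleteSpace 𝔸] (x : 𝔸) (m : ℕ) {b : ℝ} (hb0 : 0 ≤ b) (hb : b < m + 2)
    (hx : ∀ k, m + 1 ≤ k → ‖x ^ k‖ ≤ b ^ k) :
    ‖exp x - ∑ k ∈ range (m + 1), (k ! : 𝕂)⁻¹ • x ^ k‖ ≤ b ^ (m + 1) / (1 - b / (m + 2)) := by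
  have hr0 : 0 ≤ b / (m + 2) := by positivity
  have hr1 : b / (m + 2) < 1 := (div_lt_one (by positivity)).2 hb
  have htail : exp x - ∑ k ∈ range (m + 1), (k ! : 𝕂)⁻¹ • x ^ k =
      ∑' i, ((i + (m + 1))! : 𝕂)⁻¹ • x ^ (i + (m + 1)) := by
    rw [congrFun (exp_eq_tsum 𝕂) x, ← (expSeries_summable' (𝕂 := 𝕂) x).sum_add_tsum_nat_add (m + 1),
      add_sub_cancel_left]
  have hterm : ∀ i : ℕ, ‖((i + (m + 1))! : 𝕂)⁻¹ • x ^ (i + (m + 1))‖ ≤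
      b ^ (m + 1) * (b / (m + 2)) ^ i := by
    intro i
    have hfact : ((m + 2 : ℕ) : ℝ) ^ i ≤ ((m + 1 + i)! : ℝ) := by
      exact_mod_cast pow_le_factorial_add m i
    push_cast at hfact
    rw [norm_smul, norm_inv, RCLike.norm_natCast, ← div_eq_inv_mul, add_comm i, div_pow, mul_div,
      ← pow_add]
    exact div_le_div₀ (by positivity) (hx _ (by omega)) (by positivity) hfact
  rw [htail, div_eq_mul_inv]
  exact tsum_of_norm_bounded ((hasSum_geometric_of_lt_one hr0 hr1).mul_left _) hterm

theorem pow_div_one_sub_div_le {b t c : ℝ} (n : ℕ) (hb : 0 ≤ b) (hbt : b ≤ t) (htc : t < c) :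
    b ^ n / (1 - b / c) ≤ t ^ n / (1 - t / c) := by
  have hc : 0 < c := hb.trans_lt (hbt.trans_lt htc)
  have ht : 0 < 1 - t / c := by rw [sub_pos, div_lt_one hc]; exact htc
  gcongr
  exact pow_nonneg (hb.trans hbt) n

theorem le_pow_of_rpow_inv_le {a α : ℝ} {j : ℕ} (ha : 0 ≤ a) (hα : 0 ≤ α) (hj : 0 < j)
    (h : a ^ (j : ℝ)⁻¹ ≤ α) : a ≤ α ^ j := by
  rwa [Real.rpow_inv_le_iff_of_pos ha hα (by positivity), Real.rpow_natCast] at h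

open Matrix

attribute [local instance] Matrix.linftyOpNormedAddCommGroup Matrix.linftyOpNormedRing
  Matrix.linftyOpNormedAlgebra

theorem matrixOneNorm_eq_norm_transpose {n : ℕ} (A : Matrix (Fin n) (Fin n) ℂ) :
    matrixOneNorm A = ‖Aᵀ‖ := by
  rw [matrixOneNorm, linfty_opNorm_def, sup_univ_eq_ciSup, NNReal.coe_iSup]
  simp [transpose_apply]

theorem transpose_exp_sub_sum_range {n : ℕ} (A : Matrix (Fin n) (Fin n) ℂ) (m : ℕ) :
    (exp A - ∑ k ∈ range (m + 1), (k ! : ℂ)⁻¹ • A ^ k)ᵀ =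
      exp Aᵀ - ∑ k ∈ range (m + 1), (k ! : ℂ)⁻¹ • Aᵀ ^ k := by
  simp only [transpose_sub, transpose_sum, transpose_smul, transpose_pow, exp_transpose]

theorem norm_smul_transpose_pow_le {n : ℕ} {W : Matrix (Fin n) (Fin n) ℂ} {j : ℕ} {a α : ℝ}
    (c : ℂ) (hj : 0 < j) (hα : 0 ≤ α) (hW : matrixOneNorm (W ^ j) ≤ a) (ha : a ^ (j : ℝ)⁻¹ ≤ α) :
    ‖(c • Wᵀ) ^ j‖ ≤ (‖c‖ * α) ^ j := by
  have hWj : ‖Wᵀ ^ j‖ ≤ α ^ j := by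
    rw [← transpose_pow, ← matrixOneNorm_eq_norm_transpose]
    refine hW.trans (le_pow_of_rpow_inv_le ?_ hα hj ha)
    exact (matrixOneNorm_eq_norm_transpose _ ▸ norm_nonneg _).trans hW
  rw [smul_pow, norm_smul, norm_pow, mul_pow]
  gcongr

theorem matrix_exp_scaled_taylor_remainder_oneNorm_le_general {n : ℕ}
    (W : Matrix (Fin n) (Fin n) ℂ)
    (m : ℕ) (a : ℕ → ℝ) (ha : ∀ k : ℕ, 0 < k → matrixOneNorm (W ^ k) ≤ a k)
    (p : ℕ) (hp1 : 1 ≤ p)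
    (p₀ : ℕ) (hp₀mul : p ∣ p₀)
    (α : ℝ)
    (hα : α = (insert p ((Finset.Icc (m + 1) (m + 1 + p)).erase p₀)).sup'
        ⟨p, Finset.mem_insert_self p _⟩ (fun k => a k ^ ((k : ℝ)⁻¹)))
    (hα0 : 0 < α)
    (ε : ℝ) (hε : 0 < ε) (s : ℕ)
    (hs : α / 2 ^ s ≤ ε ^ ((m + 1 : ℝ)⁻¹))
    (hεlt : ε ^ ((m + 1 : ℝ)⁻¹) < m + 2) :
    matrixOneNorm (NormedSpace.exp ((2 ^ s : ℂ)⁻¹ • W) -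
        ∑ k ∈ Finset.range (m + 1), (Nat.factorial k : ℂ)⁻¹ • ((2 ^ s : ℂ)⁻¹ • W) ^ k) ≤
      ε * (1 / (1 - ε ^ ((m + 1 : ℝ)⁻¹) / (m + 2))) := by
  set t : ℝ := ε ^ ((m + 1 : ℝ)⁻¹)
  have ht : t ^ (m + 1) = ε := by
    simpa using Real.rpow_inv_natCast_pow (n := m + 1) hε.le (by omega)
  have hc : ‖(2 ^ s : ℂ)⁻¹‖ * α = α / 2 ^ s := by simp [div_eq_inv_mul]
  have hbound : ∀ j ∈ insert p ((Icc (m + 1) (m + 1 + p)).erase p₀),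
      ‖((2 ^ s : ℂ)⁻¹ • Wᵀ) ^ j‖ ≤ (α / 2 ^ s) ^ j := by
    intro j hj
    have hj0 : 0 < j := by
      rcases mem_insert.1 hj with rfl | hmem
      · exact hp1
      · exact (mem_Icc.1 (mem_of_mem_erase hmem)).1.trans_lt' m.succ_pos
    rw [← hc]
    exact norm_smul_transpose_pow_le _ hj0 hα0.le (ha j hj0)
      (hα ▸ le_sup' (fun k => a k ^ ((k : ℝ)⁻¹)) hj)
  have hpow : ∀ k, m + 1 ≤ k → ‖((2 ^ s : ℂ)⁻¹ • Wᵀ) ^ k‖ ≤ (α / 2 ^ s) ^ k :=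
    fun k => norm_pow_le_of_le_on_Ico_of_not_dvd hp1 (hbound p (mem_insert_self _ _))
      fun r hr hpr => hbound r <| mem_insert_of_mem <|
        mem_erase.2 ⟨fun h => hpr (h ▸ hp₀mul), Ico_subset_Icc_self hr⟩
  rw [matrixOneNorm_eq_norm_transpose, transpose_exp_sub_sum_range, transpose_smul, ← ht,
    mul_one_div]
  exact (norm_exp_sub_sum_range_le _ m (by positivity) (hs.trans_lt hεlt) hpow).trans
    (pow_div_one_sub_div_le _ (by positivity) hs hεlt)

/-- Let `W` be an `n×n` complex matrix and `m ≥ 1`.  Suppose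
`‖W^k‖₁ ≤ a k` for every `k ≥ 1`.  Let `1 ≤ p ≤ m+1`, let `p₀` be a multiple of `p` with
`m+1 ≤ p₀ ≤ m+1+p`, and let
`α_p = max { (a k)^{1/k} : k = p, m+1, m+2, …, p₀-1, p₀+1, …, m+1+p }`, with `α_p > 0`.
Let `ε > 0` and let `s` be a nonnegative integer such that `α_p/2^s ≤ ε^{1/(m+1)}` and
`ε^{1/(m+1)} < m+2`.  Then the Taylor remainder of the scaled matrix satisfies
`‖R_m(W/2^s)‖₁ ≤ ε · 1/(1 - ε^{1/(m+1)}/(m+2))`, where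
`R_m(A) = e^A - ∑_{k=0}^m A^k/k!`. -/
theorem matrix_exp_scaled_taylor_remainder_oneNorm_le {n : ℕ}
    (W : Matrix (Fin n) (Fin n) ℂ)
    (m : ℕ) (hm : 0 < m) (a : ℕ → ℝ) (ha : ∀ k : ℕ, 0 < k → matrixOneNorm (W ^ k) ≤ a k)
    (p : ℕ) (hp1 : 1 ≤ p) (hpm : p ≤ m + 1)
    (p₀ : ℕ) (hp₀mul : p ∣ p₀) (hp₀l : m + 1 ≤ p₀) (hp₀u : p₀ ≤ m + 1 + p)
    (α : ℝ)
    (hα : α = (insert p ((Finset.Icc (m + 1) (m + 1 + p)).erase p₀)).sup'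
        ⟨p, Finset.mem_insert_self p _⟩ (fun k => a k ^ ((k : ℝ)⁻¹)))
    (hα0 : 0 < α)
    (ε : ℝ) (hε : 0 < ε) (s : ℕ)
    (hs : α / 2 ^ s ≤ ε ^ ((m + 1 : ℝ)⁻¹))
    (hεlt : ε ^ ((m + 1 : ℝ)⁻¹) < m + 2) :
    matrixOneNorm (NormedSpace.exp ((2 ^ s : ℂ)⁻¹ • W) -
        ∑ k ∈ Finset.range (m + 1), (Nat.factorial k : ℂ)⁻¹ • ((2 ^ s : ℂ)⁻¹ • W) ^ k) ≤
      ε * (1 / (1 - ε ^ ((m + 1 : ℝ)⁻¹) / (m + 2))) :=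
  matrix_exp_scaled_taylor_remainder_oneNorm_le_general W m a ha p hp1 p₀ hp₀mul α hα hα0 ε hε s hs
    hεlt
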